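/- arXiv:math/9708211 — 3 statements merged into one kernel-verified Lean document; each statement's English description precedes it below -/
import Mathlib

section
/- The determinant of A(μ) = [[−40/7 − 32μ/105, 8/105, 14], [40/7 + 320μ/21, −80/21, 0], [−84, −84, −105]] is strictly negative for all μ ≥ 0. Consequently A(μ) always has at least one eigenvalue with negative real part, and the equilibrium is never totally unstable. -/
open Matrix Complex

/-- The determinant of `A(μ)` is strictly negative for all `μ ≥ 0`, so `A(μ)`
always has an eigenvalue with negative real part: the equilibrium is never
totally unstable. -/
theorem det_negative_D1_4_D2_0 (μ : ℝ) (hμ : 0 ≤ μ)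
    (A : Matrix (Fin 3) (Fin 3) ℝ)
    (hA : A = !![-(40 / 7) - 32 * μ / 105, 8 / 105, 14;
                 40 / 7 + 320 * μ / 21, -(80 / 21), 0;
                 -84, -84, -105]) :
    A.det < 0 ∧ ∃ z ∈ spectrum ℂ (A.map (Complex.ofReal)), z.re < 0 := by
  subst hA
  have hdet : (!![-(40 / 7) - 32 * μ / 105, 8 / 105, 14;
                 40 / 7 + 320 * μ / 21, -(80 / 21), (0:ℝ);
                 -84, -84, -105]).det = -13440 - 17920 * μ := by
    simp [Matrix.det_fin_three]
    ring
  constructor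
  · rw [hdet]; linarith
  -- characteristic-type polynomial g x = det (x • 1 - A)
  set g : ℝ → ℝ := fun x =>
    x ^ 3 + (2405 / 21 + 32 * μ / 105) * x ^ 2 + (6592 / 3 + 32 * μ) * x
      + (13440 + 17920 * μ) with hg
  have hcont : ContinuousOn g (Set.Icc (-(200 + μ)) 0) := by
    fun_prop
  have h0 : g 0 = 13440 + 17920 * μ := by simp [hg]
  have hneg : g (-(200 + μ)) < 0 := by
    simp only [hg]
    nlinarith [sq_nonneg μ, sq_nonneg (μ + 200), mul_nonneg (mul_nonneg hμ hμ) hμ]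
  have hle : (-(200 + μ) : ℝ) ≤ 0 := by linarith
  have hmem : (0 : ℝ) ∈ Set.Icc (g (-(200 + μ))) (g 0) := by
    constructor
    · linarith
    · rw [h0]; linarith
  obtain ⟨r, hrI, hr0⟩ := intermediate_value_Icc hle hcont hmem
  have hrneg : r < 0 := by
    rcases lt_or_eq_of_le hrI.2 with h | h
    · exact h
    · exfalso; rw [h] at hr0; rw [h0] at hr0; linarith
  refine ⟨(r : ℂ), ?_, by simpa using hrneg⟩
  rw [spectrum.mem_iff]
  intro hU
  have hdet' : (algebraMap ℂ (Matrix (Fin 3) (Fin 3) ℂ) (r : ℂ) -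
      (!![-(40 / 7) - 32 * μ / 105, 8 / 105, 14;
          40 / 7 + 320 * μ / 21, -(80 / 21), (0:ℝ);
          -84, -84, -105]).map Complex.ofReal).det = (g r : ℂ) := by
    simp [Matrix.algebraMap_eq_diagonal, Matrix.det_fin_three, hg]
    ring
  have := (Matrix.isUnit_iff_isUnit_det _).mp hU
  rw [hdet', hr0] at this
  simp at this
end

section
/- The Jacobian matrices at equilibrium of the venous-volume model with (D_1, D_2) = (3.0, 0.5) and of the venous-compliance model with (C_1, C_2) = (1.5, 0) coincide: both equal [[−40/7 − 8μ/35, 8/105, 14], [40/7 + 80μ/7, −80/21, 0], [−84, −84, −105]]. Hence the two models have identical linear stability properties for every gain μ. -/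
open Real

/-- The venous-volume model with `(D₁, D₂) = (3, 0.5)` and the
venous-compliance model with `(C₁, C₂) = (1.5, 0)` have the same Jacobian at
the equilibrium `(1, 3.5, 0.4)`, namely the stated matrix; hence identical
linear stability for every gain `μ`. -/
theorem jacobians_coincide (μ : ℝ) (hμ : 0 < μ)
    (F₁ F₂ : (Fin 3 → ℝ) → (Fin 3 → ℝ))
    (hF₁ : ∀ v : Fin 3 → ℝ, F₁ v = ![
      -(40 / 7) * v 0 + (8 / 105) * v 1 + 14 * v 2
        - (28 * (v 0) ^ (4 * μ) + 4) / (105 * (1 + (v 0) ^ (4 * μ))),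
      (40 / 7) * v 0 - (80 / 21) * v 1
        + 40 * (1 + 7 * (v 0) ^ (4 * μ)) / (21 * (1 + (v 0) ^ (4 * μ))),
      420 - 84 * v 0 - 84 * v 1 - 105 * v 2])
    (hF₂ : ∀ v : Fin 3 → ℝ, F₂ v = ![
      -(40 / 7) * v 0 + 4 * v 1 * (1 + (v 0) ^ (4 * μ)) / (105 * (v 0) ^ (4 * μ))
        + 14 * v 2 - 8 * (1 + (v 0) ^ (4 * μ)) / (105 * (v 0) ^ (4 * μ)),
      (40 / 7) * v 0 - 40 * v 1 * (1 + (v 0) ^ (4 * μ)) / (21 * (v 0) ^ (4 * μ))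
        + 80 * (1 + (v 0) ^ (4 * μ)) / (21 * (v 0) ^ (4 * μ)),
      420 - 84 * v 0 - 84 * v 1 - 105 * v 2])
    (A : Matrix (Fin 3) (Fin 3) ℝ)
    (hA : A = !![-(40 / 7) - 8 * μ / 35, 8 / 105, 14;
                 40 / 7 + 80 * μ / 7, -(80 / 21), 0;
                 -84, -84, -105]) :
    HasFDerivAt F₁ (Matrix.mulVecLin A).toContinuousLinearMap ![1, 3.5, 0.4] ∧
    HasFDerivAt F₂ (Matrix.mulVecLin A).toContinuousLinearMap ![1, 3.5, 0.4] := by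
  have hFe₁ : F₁ = _ := funext hF₁
  have hFe₂ : F₂ = _ := funext hF₂
  subst hFe₁ hFe₂
  set x : Fin 3 → ℝ := ![1, 3.5, 0.4] with hx
  have hx0 : x 0 = 1 := rfl
  have h0 : HasFDerivAt (fun v : Fin 3 → ℝ => v 0)
      (ContinuousLinearMap.proj (R := ℝ) (φ := fun _ : Fin 3 => ℝ) 0) x :=
    hasFDerivAt_apply 0 x
  have h1 : HasFDerivAt (fun v : Fin 3 → ℝ => v 1)
      (ContinuousLinearMap.proj (R := ℝ) (φ := fun _ : Fin 3 => ℝ) 1) x :=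
    hasFDerivAt_apply 1 x
  have h2 : HasFDerivAt (fun v : Fin 3 → ℝ => v 2)
      (ContinuousLinearMap.proj (R := ℝ) (φ := fun _ : Fin 3 => ℝ) 2) x :=
    hasFDerivAt_apply 2 x
  have hp : HasDerivAt (fun y : ℝ => y ^ (4 * μ)) (4 * μ) 1 := by
    simpa [Real.one_rpow] using
      Real.hasDerivAt_rpow_const (x := 1) (p := 4 * μ) (Or.inl one_ne_zero)
  have hq := ((hp.const_mul 28).add_const 4).div ((hp.const_add 1).const_mul 105)
      (by norm_num [Real.one_rpow])
  have hr := (((hp.const_mul 7).const_add 1).const_mul 40).div ((hp.const_add 1).const_mul 21)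
      (by norm_num [Real.one_rpow])
  have hs := (hp.const_add 1).div (hp.const_mul 105) (by norm_num [Real.one_rpow])
  have ht := ((hp.const_add 1).const_mul 8).div (hp.const_mul 105) (by norm_num [Real.one_rpow])
  have hu := (hp.const_add 1).div (hp.const_mul 21) (by norm_num [Real.one_rpow])
  have hw := ((hp.const_add 1).const_mul 80).div (hp.const_mul 21) (by norm_num [Real.one_rpow])
  constructor
  · rw [hasFDerivAt_pi']
    intro i
    fin_cases i
    · simp only [Matrix.cons_val_zero]
      refine HasFDerivAt.congr_fderiv
        ((((h0.const_mul (-(40/7))).add (h1.const_mul (8/105))).add (h2.const_mul 14)).sub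
          (hq.comp_hasFDerivAt_of_eq x h0 hx0.symm)) ?_
      refine ContinuousLinearMap.ext fun v => ?_
      simp [hA, hx, Matrix.mulVec, dotProduct, Matrix.vecHead, Matrix.vecTail, Function.comp,
        Fin.sum_univ_three, Real.one_rpow]
      ring
    · simp only [Matrix.cons_val_one, Matrix.head_cons]
      refine HasFDerivAt.congr_fderiv
        (((h0.const_mul (40/7)).sub (h1.const_mul (80/21))).add
          (hr.comp_hasFDerivAt_of_eq x h0 hx0.symm)) ?_
      refine ContinuousLinearMap.ext fun v => ?_
      simp [hA, hx, Matrix.mulVec, dotProduct, Matrix.vecHead, Matrix.vecTail, Function.comp,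
        Fin.sum_univ_three, Real.one_rpow]
      ring
    · simp only [Matrix.cons_val_two, Matrix.tail_cons, Matrix.head_cons]
      refine HasFDerivAt.congr_fderiv
        ((((h0.const_mul 84).const_sub 420).sub (h1.const_mul 84)).sub (h2.const_mul 105)) ?_
      refine ContinuousLinearMap.ext fun v => ?_
      simp [hA, hx, Matrix.mulVec, dotProduct, Matrix.vecHead, Matrix.vecTail, Function.comp,
        Fin.sum_univ_three, Real.one_rpow]
      ring
  · rw [hasFDerivAt_pi']
    intro i
    fin_cases i
    · refine HasFDerivAt.congr_of_eventuallyEq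
        (f := fun v : Fin 3 → ℝ =>
          -(40 / 7) * v 0 + (4 * v 1) * ((1 + (v 0) ^ (4 * μ)) / (105 * (v 0) ^ (4 * μ)))
            + 14 * v 2 - 8 * (1 + (v 0) ^ (4 * μ)) / (105 * (v 0) ^ (4 * μ))) ?_
        (Filter.Eventually.of_forall fun v => by
          show -(40 / 7) * v 0 + 4 * v 1 * (1 + (v 0) ^ (4 * μ)) / (105 * (v 0) ^ (4 * μ))
            + 14 * v 2 - 8 * (1 + (v 0) ^ (4 * μ)) / (105 * (v 0) ^ (4 * μ)) = _
          ring)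
      refine HasFDerivAt.congr_fderiv
        ((((h0.const_mul (-(40/7))).add
            ((h1.const_mul 4).mul (hs.comp_hasFDerivAt_of_eq x h0 hx0.symm))).add
          (h2.const_mul 14)).sub (ht.comp_hasFDerivAt_of_eq x h0 hx0.symm)) ?_
      refine ContinuousLinearMap.ext fun v => ?_
      simp [hA, hx, Matrix.mulVec, dotProduct, Matrix.vecHead, Matrix.vecTail, Function.comp,
        Fin.sum_univ_three, Real.one_rpow]
      ring
    · refine HasFDerivAt.congr_of_eventuallyEq
        (f := fun v : Fin 3 → ℝ =>
          (40 / 7) * v 0 - (40 * v 1) * ((1 + (v 0) ^ (4 * μ)) / (21 * (v 0) ^ (4 * μ)))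
            + 80 * (1 + (v 0) ^ (4 * μ)) / (21 * (v 0) ^ (4 * μ))) ?_
        (Filter.Eventually.of_forall fun v => by
          show (40 / 7) * v 0 - 40 * v 1 * (1 + (v 0) ^ (4 * μ)) / (21 * (v 0) ^ (4 * μ))
            + 80 * (1 + (v 0) ^ (4 * μ)) / (21 * (v 0) ^ (4 * μ)) = _
          ring)
      refine HasFDerivAt.congr_fderiv
        (((h0.const_mul (40/7)).sub
            ((h1.const_mul 40).mul (hu.comp_hasFDerivAt_of_eq x h0 hx0.symm))).add
          (hw.comp_hasFDerivAt_of_eq x h0 hx0.symm)) ?_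
      refine ContinuousLinearMap.ext fun v => ?_
      simp [hA, hx, Matrix.mulVec, dotProduct, Matrix.vecHead, Matrix.vecTail, Function.comp,
        Fin.sum_univ_three, Real.one_rpow]
      ring
    · simp only [Matrix.cons_val_two, Matrix.tail_cons, Matrix.head_cons]
      refine HasFDerivAt.congr_fderiv
        ((((h0.const_mul 84).const_sub 420).sub (h1.const_mul 84)).sub (h2.const_mul 105)) ?_
      refine ContinuousLinearMap.ext fun v => ?_
      simp [hA, hx, Matrix.mulVec, dotProduct, Matrix.vecHead, Matrix.vecTail, Function.comp,
        Fin.sum_univ_three, Real.one_rpow]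
      ring
end

section
/- The linear cardiovascular system dv/dt = Mv + b, with M = [[−1/(R_S C_SA), 1/(R_S C_SV), F C_L/C_PV], [1/(R_S C_SA), −(1/(R_S C_SV) + F C_R/C_SV), 0], [−1/(R_P C_PA), −1/(R_P C_PA), −(1/(R_P C_PA) + 1/(R_P C_PV) + F C_L/C_PV)]], has the property that M has strictly negative trace and strictly negative determinant for all positive values of the parameters R_S, R_P, C_SA, C_SV, C_PA, C_PV, C_L, C_R, F. -/
open Matrix

/-!
Abbreviating the six positive rates `a = 1/(R_S C_SA)`, `b = 1/(R_S C_SV)`, `c = F C_R/C_SV`,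
`d = F C_L/C_PV`, `e = 1/(R_P C_PA)`, `f = 1/(R_P C_PV)`, the trace is minus their sum, and in the
cofactor expansion of the determinant the only terms of positive sign, `a b (d + e + f)`, cancel,
so the determinant is minus a sum of products of rates.
-/

section CardiovascularMatrix

variable {R : Type*} [CommRing R] (a b c d e f : R)

def cardiovascularMatrix : Matrix (Fin 3) (Fin 3) R :=
  !![-a, b, d; a, -(b + c), 0; -e, -e, -(e + f + d)]

theorem trace_cardiovascularMatrix :
    (cardiovascularMatrix a b c d e f).trace = -(a + b + c + d + e + f) := by
  rw [cardiovascularMatrix, trace_fin_three]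
  simp only [of_apply, cons_val', cons_val_zero, cons_val_one, cons_val, cons_val_fin_one]
  ring

theorem det_cardiovascularMatrix :
    (cardiovascularMatrix a b c d e f).det = -(a * c * (d + e + f) + d * e * (a + b + c)) := by
  rw [cardiovascularMatrix, det_fin_three]
  simp only [of_apply, cons_val', cons_val_zero, cons_val_one, cons_val, cons_val_fin_one]
  ring

variable [PartialOrder R] [IsStrictOrderedRing R] {a b c d e f}

theorem trace_cardiovascularMatrix_neg (ha : 0 < a) (hb : 0 < b) (hc : 0 < c) (hd : 0 < d)
    (he : 0 < e) (hf : 0 < f) : (cardiovascularMatrix a b c d e f).trace < 0 := by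
  rw [trace_cardiovascularMatrix, neg_neg_iff_pos]
  positivity

theorem det_cardiovascularMatrix_neg (ha : 0 < a) (hb : 0 < b) (hc : 0 < c) (hd : 0 < d)
    (he : 0 < e) (hf : 0 < f) : (cardiovascularMatrix a b c d e f).det < 0 := by
  rw [det_cardiovascularMatrix, neg_neg_iff_pos]
  positivity

end CardiovascularMatrix

/-- The coefficient matrix `M` of the three-variable linear cardiovascular
model has strictly negative trace and strictly negative determinant for all
positive parameter values. -/
theorem linear_model_trace_det_negative
    (CSA CSV CPA CPV CL CR RS RP F : ℝ)
    (hCSA : 0 < CSA) (hCSV : 0 < CSV) (hCPA : 0 < CPA) (hCPV : 0 < CPV)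
    (hCL : 0 < CL) (hCR : 0 < CR) (hRS : 0 < RS) (hRP : 0 < RP) (hF : 0 < F)
    (M : Matrix (Fin 3) (Fin 3) ℝ)
    (hM : M = !![-(1 / (RS * CSA)), 1 / (RS * CSV), F * CL / CPV;
                 1 / (RS * CSA), -(1 / (RS * CSV) + F * CR / CSV), 0;
                 -(1 / (RP * CPA)), -(1 / (RP * CPA)),
                   -(1 / (RP * CPA) + 1 / (RP * CPV) + F * CL / CPV)]) :
    M.trace < 0 ∧ M.det < 0 := by
  obtain rfl : M = cardiovascularMatrix (1 / (RS * CSA)) (1 / (RS * CSV)) (F * CR / CSV)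
      (F * CL / CPV) (1 / (RP * CPA)) (1 / (RP * CPV)) := hM
  exact ⟨trace_cardiovascularMatrix_neg (by positivity) (by positivity) (by positivity)
      (by positivity) (by positivity) (by positivity),
    det_cardiovascularMatrix_neg (by positivity) (by positivity) (by positivity)
      (by positivity) (by positivity) (by positivity)⟩
end
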